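/- Every Q-SOS refutation of Equality_n has existential Q-degree at least n (and therefore Q-size 2^{Ω(n)}). -/

import Mathlib

open MvPolynomial

/-- The rational value of a Boolean. -/
noncomputable def bval (b : Bool) : ℚ := if b then 1 else 0

/-- A Q-SOS refutation of a QBF over variables `Fin n` (in prefix order), with
existential variables marked by `E` and matrix encoded by the polynomials in `P`:
an identity `Σ_{p∈P} q_p·p + Σ_u q_u·(1-2u) + Σ s² + 1 = 0` where each `q_u`
(for universal `u`) only mentions variables left of `u`. -/
structure QSOS (n : ℕ) (E : Fin n → Bool) (P : Finset (MvPolynomial (Fin n) ℚ)) where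
  qp : MvPolynomial (Fin n) ℚ → MvPolynomial (Fin n) ℚ
  qu : Fin n → MvPolynomial (Fin n) ℚ
  sq : Multiset (MvPolynomial (Fin n) ℚ)
  hvars : ∀ u : Fin n, E u = false → ∀ v ∈ (qu u).vars, v < u
  huz : ∀ u : Fin n, E u = true → qu u = 0
  hid : ∑ p ∈ P, qp p * p
      + ∑ u : Fin n, qu u * (1 - 2 * X u)
      + (sq.map fun s => s ^ 2).sum + 1 = 0

/-- Q-size of a Q-SOS refutation: the number of monomials in the `q_u` polynomials. -/
noncomputable def QSOS.qsize {n : ℕ} {E : Fin n → Bool}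
    {P : Finset (MvPolynomial (Fin n) ℚ)} (π : QSOS n E P) : ℕ :=
  ∑ u : Fin n, (π.qu u).support.card

/-- Existential Q-degree of a Q-SOS refutation: the largest number of existential
variables (with multiplicity) in a monomial of some `q_u`. -/
noncomputable def QSOS.exdeg {n : ℕ} {E : Fin n → Bool}
    {P : Finset (MvPolynomial (Fin n) ℚ)} (π : QSOS n E P) : ℕ :=
  Finset.univ.sup fun u : Fin n =>
    (π.qu u).support.sup fun m => ∑ i ∈ Finset.univ.filter (fun i => E i = true), m i

/-! The Equality_n formulas: `∃x₁…x_n ∀u₁…u_n ∃t₁…t_n.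
⋀ᵢ (tᵢ → (xᵢ ↮ uᵢ)) ∧ ⋁ᵢ tᵢ`, over variables `Fin (3n)` in prefix order:
`x_i` at position `i`, `u_i` at position `n+i`, `t_i` at position `2n+i`. -/

/-- Index of `x_i`. -/
def exIdx (n : ℕ) (i : Fin n) : Fin (3 * n) := ⟨i, by have := i.isLt; omega⟩

/-- Index of `u_i`. -/
def euIdx (n : ℕ) (i : Fin n) : Fin (3 * n) := ⟨n + i, by have := i.isLt; omega⟩

/-- Index of `t_i`. -/
def etIdx (n : ℕ) (i : Fin n) : Fin (3 * n) := ⟨2 * n + i, by have := i.isLt; omega⟩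

open Classical in
/-- The polynomial encoding of the matrix of `Equality_n`: the Boolean axioms, for each
`i` the constraint `tᵢ → (xᵢ ↮ uᵢ)` (encoded as `tᵢ·(1 - (xᵢ + uᵢ - 2xᵢuᵢ))`), and the
clause `⋁ᵢ tᵢ` (encoded as `∏ᵢ (1 - tᵢ)`). -/
noncomputable def eqEnc (n : ℕ) : Finset (MvPolynomial (Fin (3 * n)) ℚ) :=
  (Finset.univ.image fun v : Fin (3 * n) => X v ^ 2 - X v)
    ∪ (Finset.univ.image fun i : Fin n =>
        X (etIdx n i) * (1 - (X (exIdx n i) + X (euIdx n i)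
          - 2 * X (exIdx n i) * X (euIdx n i))))
    ∪ {∏ i : Fin n, (1 - X (etIdx n i))}

/-- The existential variables of `Equality_n`: the `x`- and `t`-variables. -/
def eqE (n : ℕ) (v : Fin (3 * n)) : Bool := decide ((v : ℕ) < n ∨ 2 * n ≤ (v : ℕ))


section Aux

open Finset

/-- Summing a function that is antisymmetric under flipping coordinate `j` gives zero. -/
lemma flip_sum_zero {n : ℕ} (j : Fin n) (s : Finset (Fin n → Bool))
    (hs : ∀ α ∈ s, Function.update α j (!α j) ∈ s)
    (F : (Fin n → Bool) → ℚ)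
    (hF : ∀ α ∈ s, F (Function.update α j (!α j)) = - F α) :
    ∑ α ∈ s, F α = 0 := by
  refine Finset.sum_involution (fun α _ => Function.update α j (!α j)) ?_ ?_ hs ?_
  · intro α ha; rw [hF α ha]; ring
  · intro α ha _ h
    have h2 := congrFun h j
    simp only [Function.update_self] at h2
    exact (Bool.not_ne_self (α j)) h2
  · intro α ha
    simp [Function.update_idem, Function.update_self, Bool.not_not, Function.update_eq_self]

lemma eval_congr_on_vars {N : ℕ} (p : MvPolynomial (Fin N) ℚ) (f g : Fin N → ℚ)
    (h : ∀ v ∈ p.vars, f v = g v) : MvPolynomial.eval f p = MvPolynomial.eval g p := by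
  rw [MvPolynomial.eval_eq, MvPolynomial.eval_eq]
  refine Finset.sum_congr rfl fun d hd => ?_
  congr 1
  refine Finset.prod_congr rfl fun v hv => ?_
  rw [h v ((MvPolynomial.mem_vars v).mpr ⟨d, hd, hv⟩)]

end Aux

section Key

open Finset MvPolynomial

variable {n : ℕ}

lemma bval_sq (b : Bool) : bval b ^ 2 = bval b := by cases b <;> simp [bval]

/-- The evaluation point: `x = α`, `u = γ`, `t_i = α_i ⊕ γ_i` for `i ∈ K`, `t_i = 0` else. -/
noncomputable def ptB (K : Finset (Fin n)) (α γ : Fin n → Bool) (v : Fin (3 * n)) : Bool :=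
  if h : (v : ℕ) < n then α ⟨v, h⟩
  else if h2 : (v : ℕ) < 2 * n then γ ⟨(v : ℕ) - n, by omega⟩
  else
    decide ((⟨(v : ℕ) - 2 * n, by have := v.isLt; omega⟩ : Fin n) ∈ K)
      && ((α ⟨(v : ℕ) - 2 * n, by have := v.isLt; omega⟩) !=
          (γ ⟨(v : ℕ) - 2 * n, by have := v.isLt; omega⟩))

noncomputable def pnt (K : Finset (Fin n)) (α γ : Fin n → Bool) : Fin (3 * n) → ℚ :=
  fun v => bval (ptB K α γ v)

@[simp] lemma ptB_ex (K : Finset (Fin n)) (α γ : Fin n → Bool) (i : Fin n) :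
    ptB K α γ (exIdx n i) = α i := by
  have hi := i.isLt
  simp only [ptB, exIdx]
  simp [hi]

@[simp] lemma ptB_eu (K : Finset (Fin n)) (α γ : Fin n → Bool) (i : Fin n) :
    ptB K α γ (euIdx n i) = γ i := by
  have hi := i.isLt
  have h1 : ¬ (n + (i : ℕ) < n) := by omega
  have h2 : n + (i : ℕ) < 2 * n := by omega
  simp only [ptB, euIdx]
  erw [dif_neg h1, dif_pos h2]
  congr 1
  exact Fin.ext (by simp)

@[simp] lemma ptB_et (K : Finset (Fin n)) (α γ : Fin n → Bool) (i : Fin n) :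
    ptB K α γ (etIdx n i) = (decide (i ∈ K) && (α i != γ i)) := by
  have hi := i.isLt
  have h1 : ¬ (2 * n + (i : ℕ) < n) := by omega
  have h2 : ¬ (2 * n + (i : ℕ) < 2 * n) := by omega
  simp only [ptB, etIdx]
  erw [dif_neg h1, dif_neg h2]
  have he : (⟨2 * n + (i : ℕ) - 2 * n, by omega⟩ : Fin n) = i := Fin.ext (by simp)
  simp only [he]

lemma eval_axiom_zero (K : Finset (Fin n)) (α γ : Fin n → Bool)
    (hne : ∃ i ∈ K, α i ≠ γ i) (p : MvPolynomial (Fin (3 * n)) ℚ) (hp : p ∈ eqEnc n) :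
    MvPolynomial.eval (pnt K α γ) p = 0 := by
  simp only [eqEnc, Finset.mem_union, Finset.mem_image, Finset.mem_singleton] at hp
  rcases hp with (⟨v, _, rfl⟩ | ⟨i, _, rfl⟩) | rfl
  · simp [pnt, bval_sq]
  · by_cases hiK : i ∈ K <;>
      cases hα : α i <;> cases hγ : γ i <;>
      simp [pnt, hiK, hα, hγ, bval]
  · obtain ⟨i, hiK, hne⟩ := hne
    rw [map_prod]
    apply Finset.prod_eq_zero (Finset.mem_univ i)
    have hxy : (α i != γ i) = true := by
      cases hα : α i <;> cases hγ : γ i <;> simp_all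
    simp [pnt, hiK, hxy, bval]

end Key

section Key2

open Finset MvPolynomial

variable {n : ℕ}

noncomputable def hfun (π : QSOS (3 * n) (eqE n) (eqEnc n)) (K : Finset (Fin n))
    (α γ : Fin n → Bool) : ℚ :=
  ∑ i : Fin n, MvPolynomial.eval (pnt K α γ) (π.qu (euIdx n i)) * (1 - 2 * bval (γ i))

lemma eqE_eu (i : Fin n) : eqE n (euIdx n i) = false := by
  have hi := i.isLt
  simp only [eqE, euIdx]
  apply decide_eq_false
  omega

lemma vars_lt (π : QSOS (3 * n) (eqE n) (eqEnc n)) (i : Fin n) :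
    ∀ v ∈ (π.qu (euIdx n i)).vars, (v : ℕ) < n + i := by
  intro v hv
  have := π.hvars _ (eqE_eu i) v hv
  simpa [euIdx, Fin.lt_def] using this

lemma euIdx_inj : Function.Injective (euIdx n) := by
  intro a b h
  have := congrArg Fin.val h
  simp only [euIdx] at this
  exact Fin.ext (by omega)

lemma hfun_eq (π : QSOS (3 * n) (eqE n) (eqEnc n)) (K : Finset (Fin n)) (α γ : Fin n → Bool) :
    ∑ u : Fin (3 * n), MvPolynomial.eval (pnt K α γ) (π.qu u * (1 - 2 * X u))
      = hfun π K α γ := by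
  rw [← Finset.sum_subset (Finset.subset_univ ((Finset.univ : Finset (Fin n)).image (euIdx n)))
    ?_]
  · rw [Finset.sum_image (fun a _ b _ h => euIdx_inj h)]
    refine Finset.sum_congr rfl fun i _ => ?_
    rw [map_mul]
    congr 1
    rw [map_sub, map_mul, map_one, eval_X]
    norm_num [pnt]
  · intro u _ hu
    by_cases he : eqE n u = true
    · rw [π.huz u he]; simp
    · exfalso
      apply hu
      have h2 : ¬ ((u : ℕ) < n ∨ 2 * n ≤ (u : ℕ)) := by
        simpa [eqE] using he
      push_neg at h2
      refine Finset.mem_image.mpr ⟨⟨(u : ℕ) - n, by omega⟩, Finset.mem_univ _, ?_⟩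
      exact Fin.ext (by simp [euIdx]; omega)

lemma hfun_le (π : QSOS (3 * n) (eqE n) (eqEnc n)) (K : Finset (Fin n)) (α γ : Fin n → Bool)
    (hne : ∃ i ∈ K, α i ≠ γ i) : hfun π K α γ ≤ -1 := by
  have hid := congrArg (MvPolynomial.eval (pnt K α γ)) π.hid
  rw [map_zero, map_add, map_add, map_add, map_one, map_sum, map_sum] at hid
  have hA : ∑ p ∈ eqEnc n, MvPolynomial.eval (pnt K α γ) (π.qp p * p) = 0 := by
    refine Finset.sum_eq_zero fun p hp => ?_
    rw [map_mul, eval_axiom_zero K α γ hne p hp, mul_zero]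
  rw [hA, hfun_eq π K α γ] at hid
  have hC : 0 ≤ MvPolynomial.eval (pnt K α γ) (π.sq.map fun s => s ^ 2).sum := by
    rw [map_multiset_sum, Multiset.map_map]
    refine Multiset.sum_nonneg fun x hx => ?_
    obtain ⟨s, _, rfl⟩ := Multiset.mem_map.mp hx
    simp only [Function.comp_apply, map_pow]
    positivity
  linarith

lemma sum_gamma (π : QSOS (3 * n) (eqE n) (eqEnc n)) (K : Finset (Fin n)) (α : Fin n → Bool) :
    ∑ γ : Fin n → Bool, hfun π K α γ = 0 := by
  unfold hfun
  rw [Finset.sum_comm]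
  refine Finset.sum_eq_zero fun i _ => ?_
  refine flip_sum_zero i Finset.univ (fun _ _ => Finset.mem_univ _) _ (fun γ _ => ?_)
  have heq : MvPolynomial.eval (pnt K α (Function.update γ i (!γ i))) (π.qu (euIdx n i))
      = MvPolynomial.eval (pnt K α γ) (π.qu (euIdx n i)) := by
    refine eval_congr_on_vars _ _ _ fun v hv => ?_
    have hvlt := vars_lt π i v hv
    have hi := i.isLt
    unfold pnt ptB
    by_cases h1 : (v : ℕ) < n
    · simp only [dif_pos h1]
    · have h2 : (v : ℕ) < 2 * n := by omega
      simp only [dif_neg h1, dif_pos h2]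
      congr 2
      refine Function.update_of_ne (fun hc => ?_) _ _
      have := congrArg Fin.val hc
      simp only at this
      omega
  rw [heq]
  have hb : bval (Function.update γ i (!γ i) i) = 1 - bval (γ i) := by
    cases hγ : γ i <;> simp [Function.update_self, hγ, bval]
  rw [hb]
  ring

end Key2

section Key3

open Finset MvPolynomial

variable {n : ℕ}

/-- The sign `∏_{i ∈ K} ±1` comparing `α` and `γ` on `K`. -/
noncomputable def sgnK (K : Finset (Fin n)) (γ α : Fin n → Bool) : ℚ :=
  ∏ i ∈ K, (if α i = γ i then (1 : ℚ) else -1)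

open Classical in
/-- Assignments supported on `K`. -/
noncomputable def ASet (K : Finset (Fin n)) : Finset (Fin n → Bool) :=
  Finset.univ.filter fun α => ∀ j, j ∉ K → α j = false

lemma mem_ASet {K : Finset (Fin n)} {α : Fin n → Bool} :
    α ∈ ASet K ↔ ∀ j, j ∉ K → α j = false := by
  simp [ASet]

lemma ASet_flip {K : Finset (Fin n)} {j : Fin n} (hj : j ∈ K) {α : Fin n → Bool}
    (hα : α ∈ ASet K) (b : Bool) : Function.update α j b ∈ ASet K := by
  rw [mem_ASet] at hα ⊢
  intro j' hj'
  rw [Function.update_of_ne (fun hc => hj' (by rw [hc]; exact hj)) _ _]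
  exact hα j' hj'

lemma sgnK_flip {K : Finset (Fin n)} {j : Fin n} (hj : j ∈ K) (γ : Fin n → Bool)
    (α : Fin n → Bool) : sgnK K γ (Function.update α j (!α j)) = - sgnK K γ α := by
  unfold sgnK
  rw [← Finset.mul_prod_erase K _ hj, ← Finset.mul_prod_erase K _ hj]
  have hrest : ∏ i ∈ K.erase j, (if Function.update α j (!α j) i = γ i then (1 : ℚ) else -1)
      = ∏ i ∈ K.erase j, (if α i = γ i then (1 : ℚ) else -1) := by
    refine Finset.prod_congr rfl fun i hi => ?_
    rw [Function.update_of_ne (Finset.ne_of_mem_erase hi) _ _]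
  rw [hrest, Function.update_self]
  cases hαj : α j <;> cases hγj : γ j <;> simp <;> ring

lemma sgnK_pm (K : Finset (Fin n)) (γ α : Fin n → Bool) :
    sgnK K γ α = 1 ∨ sgnK K γ α = -1 := by
  unfold sgnK
  refine Finset.prod_induction _ (fun x => x = 1 ∨ x = -1) ?_ (Or.inl rfl) ?_
  · rintro a b (rfl | rfl) (rfl | rfl) <;> norm_num
  · intro i _
    split_ifs <;> simp

/-- The alternating sum vanishes when no monomial covers exactly the `x`-variables in `K`. -/
lemma alt_sum (π : QSOS (3 * n) (eqE n) (eqEnc n)) (K : Finset (Fin n)) (γ : Fin n → Bool)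
    (H : ∀ u : Fin (3 * n), ∀ m ∈ (π.qu u).support,
      (∀ j ∈ K, m (exIdx n j) ≠ 0) → ∃ j, j ∉ K ∧ m (exIdx n j) ≠ 0) :
    ∑ α ∈ ASet K, sgnK K γ α * hfun π K α γ = 0 := by
  unfold hfun
  simp_rw [Finset.mul_sum]
  rw [Finset.sum_comm]
  refine Finset.sum_eq_zero fun i _ => ?_
  set q := π.qu (euIdx n i) with hq
  set c := fun (γ : Fin n → Bool) (i : Fin n) => (1 - 2 * bval (γ i)) with hc
  have mono_zero : ∀ m ∈ q.support,
      ∑ α ∈ ASet K, sgnK K γ α * ∏ v ∈ m.support, pnt K α γ v ^ m v = 0 := by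
    intro m hm
    by_cases hcase : ∀ j ∈ K, m (exIdx n j) ≠ 0
    · obtain ⟨j, hjK, hjm⟩ := H (euIdx n i) m hm hcase
      refine Finset.sum_eq_zero fun α hα => ?_
      have hα' : α j = false := (mem_ASet.mp hα) j hjK
      have hmem : exIdx n j ∈ m.support := Finsupp.mem_support_iff.mpr hjm
      rw [Finset.prod_eq_zero hmem, mul_zero]
      simp only [pnt, ptB_ex, hα', bval]
      simp [zero_pow hjm]
    · push_neg at hcase
      obtain ⟨j, hjK, hj0⟩ := hcase
      refine flip_sum_zero j (ASet K) (fun α hα => ASet_flip hjK hα _) _ (fun α hα => ?_)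
      have h2 : ∏ v ∈ m.support, pnt K (Function.update α j (!α j)) γ v ^ m v
          = ∏ v ∈ m.support, pnt K α γ v ^ m v := by
        refine Finset.prod_congr rfl fun v hv => ?_
        have hvlt : (v : ℕ) < n + i := vars_lt π i v ((MvPolynomial.mem_vars v).mpr ⟨m, hm, hv⟩)
        have hi := i.isLt
        congr 1
        unfold pnt ptB
        by_cases h1 : (v : ℕ) < n
        · simp only [dif_pos h1]
          congr 1
          refine Function.update_of_ne (fun hcc => ?_) _ _
          have : v = exIdx n j := by
            refine Fin.ext ?_
            have := congrArg Fin.val hcc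
            simpa [exIdx] using this
          rw [this] at hv
          exact (Finsupp.mem_support_iff.mp hv) hj0
        · have h2' : (v : ℕ) < 2 * n := by omega
          simp only [dif_neg h1, dif_pos h2']
      rw [h2, sgnK_flip hjK γ α]
      ring
  calc ∑ α ∈ ASet K, sgnK K γ α * (MvPolynomial.eval (pnt K α γ) q * c γ i)
      = ∑ α ∈ ASet K, ∑ m ∈ q.support,
          (q.coeff m * c γ i) * (sgnK K γ α * ∏ v ∈ m.support, pnt K α γ v ^ m v) := by
        refine Finset.sum_congr rfl fun α _ => ?_
        rw [MvPolynomial.eval_eq, Finset.sum_mul, Finset.mul_sum]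
        refine Finset.sum_congr rfl fun m _ => ?_
        ring
    _ = ∑ m ∈ q.support, (q.coeff m * c γ i) *
          ∑ α ∈ ASet K, (sgnK K γ α * ∏ v ∈ m.support, pnt K α γ v ^ m v) := by
        rw [Finset.sum_comm]
        exact Finset.sum_congr rfl fun m _ => (Finset.mul_sum _ _ _).symm
    _ = 0 := Finset.sum_eq_zero fun m hm => by rw [mono_zero m hm, mul_zero]

set_option maxHeartbeats 1000000 in
/-- The key lemma: for every nonempty `K ⊆ [n]`, some `q_u` has a monomial whose set of
`x`-variables is exactly `K`. -/
lemma key (π : QSOS (3 * n) (eqE n) (eqEnc n)) (K : Finset (Fin n)) (hK : K.Nonempty) :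
    ∃ u : Fin (3 * n), ∃ m ∈ (π.qu u).support,
      (∀ j ∈ K, m (exIdx n j) ≠ 0) ∧ (∀ j ∉ K, m (exIdx n j) = 0) := by
  by_contra hcon
  push_neg at hcon
  have hcon' : ∀ u : Fin (3 * n), ∀ m ∈ (π.qu u).support,
      (∀ j ∈ K, m (exIdx n j) ≠ 0) → ∃ j, j ∉ K ∧ m (exIdx n j) ≠ 0 := by
    intro u m hm hall
    obtain ⟨j, hj1, hj2⟩ := hcon u m hm hall
    exact ⟨j, hj1, hj2⟩
  have htot : ∑ γ : Fin n → Bool, ∑ α ∈ ASet K, hfun π K α γ = 0 := by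
    rw [Finset.sum_comm]
    exact Finset.sum_eq_zero fun α _ => sum_gamma π K α
  have hex : ∃ γ : Fin n → Bool, 0 ≤ ∑ α ∈ ASet K, hfun π K α γ := by
    by_contra hneg
    push_neg at hneg
    have : ∑ γ : Fin n → Bool, ∑ α ∈ ASet K, hfun π K α γ < ∑ γ : Fin n → Bool, (0:ℚ) :=
      Finset.sum_lt_sum_of_nonempty Finset.univ_nonempty (fun γ _ => hneg γ)
    simp only [Finset.sum_const, smul_zero] at this
    linarith [htot]
  obtain ⟨γs, hγs⟩ := hex
  obtain ⟨j₀, hj₀⟩ := hK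
  set γh : Fin n → Bool := fun j => if j ∈ K then γs j else false with hγh
  have hγhA : γh ∈ ASet K := mem_ASet.mpr fun j hj => by simp [hγh, hj]
  have hs2 := alt_sum π K γs hcon'
  have hsgnγh : sgnK K γs γh = 1 :=
    Finset.prod_eq_one fun i hi => by simp [hγh, hi]
  have hsplit1 : hfun π K γh γs + ∑ α ∈ (ASet K).erase γh, hfun π K α γs
      = ∑ α ∈ ASet K, hfun π K α γs := Finset.add_sum_erase _ (fun α => hfun π K α γs) hγhA
  have hsplit2 : hfun π K γh γs + ∑ α ∈ (ASet K).erase γh, sgnK K γs α * hfun π K α γs = 0 := by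
    have := Finset.add_sum_erase (ASet K) (fun α => sgnK K γs α * hfun π K α γs) hγhA
    rw [hs2] at this
    simp only [hsgnγh, one_mul] at this
    linarith [this]
  have hT : ∀ α ∈ (ASet K).erase γh, hfun π K α γs ≤ -1 := by
    intro α hαT
    obtain ⟨hne, hαA⟩ := Finset.mem_erase.mp hαT
    refine hfun_le π K α γs ?_
    by_contra hc
    push_neg at hc
    apply hne
    funext j
    by_cases hj : j ∈ K
    · rw [hc j hj]; simp [hγh, hj]
    · rw [mem_ASet.mp hαA j hj]; simp [hγh, hj]
  have hptwise : ∀ α ∈ (ASet K).erase γh,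
      0 ≤ sgnK K γs α * hfun π K α γs - hfun π K α γs := by
    intro α hα
    rcases sgnK_pm K γs α with h | h
    · rw [h, one_mul]; linarith
    · rw [h]; have := hT α hα; linarith
  set α₀ := Function.update γh j₀ (!γh j₀) with hα₀
  have hα₀A : α₀ ∈ ASet K := ASet_flip hj₀ hγhA _
  have hα₀ne : α₀ ≠ γh := by
    intro hcc
    have h2 := congrFun hcc j₀
    simp only [hα₀, Function.update_self] at h2
    exact (Bool.not_ne_self (γh j₀)) h2
  have hα₀T : α₀ ∈ (ASet K).erase γh := Finset.mem_erase.mpr ⟨hα₀ne, hα₀A⟩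
  have hsgnα₀ : sgnK K γs α₀ = -1 := by
    rw [hα₀, sgnK_flip hj₀ γs γh, hsgnγh]
  have hterm : 2 ≤ sgnK K γs α₀ * hfun π K α₀ γs - hfun π K α₀ γs := by
    rw [hsgnα₀]
    have := hT α₀ hα₀T
    linarith
  have hstep : 2 ≤ ∑ α ∈ (ASet K).erase γh, (sgnK K γs α * hfun π K α γs - hfun π K α γs) := by
    have := Finset.single_le_sum hptwise hα₀T
    linarith
  rw [Finset.sum_sub_distrib] at hstep
  rw [← hsplit1] at hγs
  linarith [hγs, hsplit2, hstep]

end Key3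

section Final

open Finset MvPolynomial

lemma exIdx_inj {n : ℕ} : Function.Injective (exIdx n) := by
  intro a b h
  have := congrArg Fin.val h
  simp only [exIdx] at this
  exact Fin.ext this

lemma exdeg_ge (n : ℕ) (π : QSOS (3 * n) (eqE n) (eqEnc n)) : n ≤ π.exdeg := by
  rcases Nat.eq_zero_or_pos n with rfl | hn
  · exact Nat.zero_le _
  have : Nonempty (Fin n) := ⟨⟨0, hn⟩⟩
  obtain ⟨u, m, hm, h1, -⟩ := key π Finset.univ Finset.univ_nonempty
  have hstep1 : n ≤ ∑ j : Fin n, m (exIdx n j) := by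
    calc n = ∑ _j : Fin n, 1 := by simp
      _ ≤ ∑ j : Fin n, m (exIdx n j) :=
          Finset.sum_le_sum fun j _ => Nat.one_le_iff_ne_zero.mpr (h1 j (Finset.mem_univ j))
  have hstep2 : ∑ j : Fin n, m (exIdx n j)
      ≤ ∑ i ∈ Finset.univ.filter (fun i => eqE n i = true), m i := by
    have himg : ∑ j : Fin n, m (exIdx n j) = ∑ i ∈ Finset.univ.image (exIdx n), m i :=
      (Finset.sum_image (f := fun i => m i) (g := exIdx n) (fun a _ b _ h => exIdx_inj h)).symm
    rw [himg]
    refine Finset.sum_le_sum_of_subset fun v hv => ?_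
    obtain ⟨j, _, rfl⟩ := Finset.mem_image.mp hv
    refine Finset.mem_filter.mpr ⟨Finset.mem_univ _, ?_⟩
    have := j.isLt
    simp only [eqE, exIdx, decide_eq_true_eq]
    apply decide_eq_true
    left
    exact this
  have hstep3 : ∑ i ∈ Finset.univ.filter (fun i => eqE n i = true), m i ≤ π.exdeg := by
    refine le_trans (Finset.le_sup (f := fun m : Fin (3 * n) →₀ ℕ =>
      ∑ i ∈ Finset.univ.filter (fun i => eqE n i = true), m i) hm) ?_
    exact Finset.le_sup (f := fun u => (π.qu u).support.sup
      fun m => ∑ i ∈ Finset.univ.filter (fun i => eqE n i = true), m i) (Finset.mem_univ u)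
  omega

lemma qsize_ge (n : ℕ) (hn : 0 < n) (π : QSOS (3 * n) (eqE n) (eqEnc n)) :
    2 ^ n - 1 ≤ π.qsize := by
  classical
  have hne : Nonempty ((_ : Fin (3 * n)) × (Fin (3 * n) →₀ ℕ)) := ⟨⟨⟨0, by omega⟩, 0⟩⟩
  set big := Finset.univ.sigma (fun u : Fin (3 * n) => (π.qu u).support) with hbigdef
  have hbig : big.card = π.qsize := by
    rw [hbigdef, Finset.card_sigma]
    rfl
  set dom := (Finset.univ : Finset (Finset (Fin n))).erase ∅ with hdomdef
  have hdom : dom.card = 2 ^ n - 1 := by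
    rw [hdomdef, Finset.card_erase_of_mem (Finset.mem_univ _), Finset.card_univ,
      Fintype.card_finset, Fintype.card_fin]
  have hexz : ∀ K ∈ dom, ∃ z : (_ : Fin (3 * n)) × (Fin (3 * n) →₀ ℕ),
      z ∈ big ∧ (∀ j : Fin n, j ∈ K ↔ z.2 (exIdx n j) ≠ 0) := by
    intro K hK
    obtain ⟨u, m, hm, h1, h2⟩ := key π K
      (Finset.nonempty_iff_ne_empty.mpr (Finset.ne_of_mem_erase hK))
    refine ⟨⟨u, m⟩, Finset.mem_sigma.mpr ⟨Finset.mem_univ _, hm⟩, fun j => ⟨fun hj => h1 j hj,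
      fun hne2 => ?_⟩⟩
    by_contra hj
    exact hne2 (h2 j hj)
  choose! f hf1 hf2 using hexz
  have hinj : Set.InjOn f dom := by
    intro K1 h1 K2 h2 heq
    ext j
    rw [hf2 K1 h1 j, hf2 K2 h2 j, heq]
  have := Finset.card_le_card_of_injOn f hf1 hinj
  omega

lemma pow_aux : ∀ (k : ℕ), 2 ≤ k → (5 / 3 : ℝ) ^ k ≤ 2 ^ k - 1 := by
  intro k
  induction k with
  | zero => omega
  | succ k ih =>
    intro hk
    rcases Nat.lt_or_ge k 2 with hk2 | hk2
    · interval_cases k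
      · omega
      · norm_num
    · have ihh := ih hk2
      have h2 : (2 : ℝ) ≤ 2 ^ k := by
        calc (2:ℝ) = 2 ^ 1 := by norm_num
          _ ≤ 2 ^ k := by
            refine pow_le_pow_right₀ (by norm_num) (by omega)
      calc (5 / 3 : ℝ) ^ (k + 1) = (5 / 3) * (5 / 3) ^ k := by ring
        _ ≤ (5 / 3) * (2 ^ k - 1) := by nlinarith
        _ ≤ 2 ^ (k + 1) - 1 := by
            rw [pow_succ]
            nlinarith

end Final

/-- Every Q-SOS refutation of `Equality_n` has existential Q-degree at least `n`, and
therefore Q-size `2^{Ω(n)}`. -/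
theorem stmt_16 :
    (∀ n : ℕ, ∀ π : QSOS (3 * n) (eqE n) (eqEnc n), n ≤ π.exdeg) ∧
    ∃ c : ℝ, 0 < c ∧ ∃ N : ℕ, ∀ n : ℕ, N ≤ n →
      ∀ π : QSOS (3 * n) (eqE n) (eqEnc n), Real.exp (c * n) ≤ (π.qsize : ℝ) := by
  constructor
  · exact exdeg_ge
  · refine ⟨1 / 2, by norm_num, 2, fun n hn π => ?_⟩
    have hq := qsize_ge n (by omega) π
    have h1 : (1 : ℕ) ≤ 2 ^ n := Nat.one_le_two_pow
    have hcast : ((2 : ℝ) ^ n - 1) ≤ (π.qsize : ℝ) := by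
      have : ((2 ^ n - 1 : ℕ) : ℝ) ≤ (π.qsize : ℝ) := Nat.cast_le.mpr hq
      rwa [Nat.cast_sub h1, Nat.cast_pow, Nat.cast_ofNat, Nat.cast_one] at this
    have hexp : Real.exp (1 / 2 * (n : ℝ)) ≤ (5 / 3 : ℝ) ^ n := by
      rw [mul_comm, Real.exp_nat_mul]
      refine pow_le_pow_left₀ (Real.exp_pos _).le ?_ n
      have hsq : Real.exp (1 / 2) ^ 2 = Real.exp 1 := by
        rw [← Real.exp_nat_mul]
        norm_num
      nlinarith [Real.exp_one_lt_d9, Real.exp_pos (1 / 2 : ℝ)]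
    have hpow := pow_aux n hn
    linarith
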